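/- arXiv:1403.4860 — 10 statements merged into one kernel-verified Lean document; each statement's English description precedes it below -/
import Mathlib

section
/- Let G be a group generated by the conjugates of an element T (i.e. G equals the normal closure of T in G). Suppose Γ ≤ G is a subgroup of finite index d. Then for every S ∈ G there exists k with 1 ≤ k ≤ d such that S⁻¹ T^k S ∈ Γ; moreover, if m is a common multiple of all minimal such exponents k = k(S) over all S ∈ G, then the normal closure of T^m in G is contained in Γ. -/
theorem stmt_3 (G : Type*) [Group G] (T : G) (Γ : Subgroup G) (d : ℕ)
    (hG : Subgroup.normalClosure {T} = ⊤)
    (hd : Γ.index = d) (hd0 : 0 < d) :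
    (∀ S : G, ∃ k : ℕ, 1 ≤ k ∧ k ≤ d ∧ S⁻¹ * T ^ k * S ∈ Γ) ∧
    (∀ (mm : ℕ) (kf : G → ℕ),
      (∀ S : G, 0 < kf S ∧ S⁻¹ * T ^ (kf S) * S ∈ Γ ∧
        ∀ j : ℕ, 0 < j → S⁻¹ * T ^ j * S ∈ Γ → kf S ≤ j) →
      (∀ S : G, kf S ∣ mm) →
      Subgroup.normalClosure {T ^ mm} ≤ Γ) := by
  constructor
  · intro S
    have hfin : Γ.FiniteIndex := ⟨by omega⟩
    have hcard : Nat.card (G ⧸ Γ) = d := hd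
    have hninj : ¬ Function.Injective
        (fun i : Fin (d+1) => ((S⁻¹ * T ^ (i : ℕ) * S : G) : G ⧸ Γ)) := by
      intro hinj
      have := Nat.card_le_card_of_injective _ hinj
      simp [hcard] at this
    rw [Function.not_injective_iff] at hninj
    obtain ⟨i, j, hij, hne⟩ := hninj
    have hi := i.isLt
    have hj := j.isLt
    have hne' : (i : ℕ) ≠ (j : ℕ) := fun h => hne (Fin.ext h)
    rcases hne'.lt_or_gt with h | h
    · -- i < j
      refine ⟨(j : ℕ) - (i : ℕ), by omega, by omega, ?_⟩
      have := (QuotientGroup.eq (s := Γ)).mp hij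
      have hT : T ^ (j : ℕ) = T ^ (i : ℕ) * T ^ ((j : ℕ) - (i : ℕ)) := by
        rw [← pow_add]; congr 1; omega
      rw [hT] at this
      convert this using 1
      group
    · refine ⟨(i : ℕ) - (j : ℕ), by omega, by omega, ?_⟩
      have := (QuotientGroup.eq (s := Γ)).mp hij.symm
      have hT : T ^ (i : ℕ) = T ^ (j : ℕ) * T ^ ((i : ℕ) - (j : ℕ)) := by
        rw [← pow_add]; congr 1; omega
      rw [hT] at this
      convert this using 1
      group
  · intro mm kf hkf hdvd
    rw [Subgroup.normalClosure, Subgroup.closure_le]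
    intro x hx
    obtain ⟨a, ha, hconj⟩ := Group.mem_conjugatesOfSet_iff.mp hx
    rw [Set.mem_singleton_iff] at ha
    subst ha
    obtain ⟨g, hg⟩ := isConj_iff.mp hconj
    obtain ⟨h1, h2, _⟩ := hkf g⁻¹
    obtain ⟨n, hn⟩ := hdvd g⁻¹
    have hx2 : x = (g * T ^ kf g⁻¹ * g⁻¹) ^ n := by
      rw [← hg, hn, pow_mul, conj_pow]
    rw [hx2]
    apply pow_mem
    simpa using h2
end

section
/- Let G be a group, T ∈ G, and for each a ≥ 1 let Γ(a) ⊴ G be normal subgroups satisfying: (i) Γ(ab) ⊆ Γ(a) for all a, b; (ii) Γ(a) ∩ Γ(b) = Γ(ab) whenever gcd(a,b) = 1; (iii) T^b ∈ Γ(a) if and only if a ∣ b; (iv) G is generated by the conjugates of T. Let G(m) denote the normal closure of T^m in G. Then for coprime a, b ≥ 1 one has G(a)·Γ(ab) = Γ(a). -/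
open scoped Pointwise


theorem stmt_4 (G : Type*) [Group G] (T : G) (Γ : ℕ → Subgroup G)
    (hnorm : ∀ c : ℕ, (Γ c).Normal)
    (h1 : ∀ c d : ℕ, Γ (c * d) ≤ Γ c)
    (h2 : ∀ c d : ℕ, Nat.gcd c d = 1 → Γ c ⊓ Γ d = Γ (c * d))
    (h3 : ∀ c d : ℕ, 1 ≤ c → (T ^ d ∈ Γ c ↔ c ∣ d))
    (h4 : Subgroup.normalClosure {T} = ⊤)
    (a b : ℕ) (ha : 1 ≤ a) (hb : 1 ≤ b) (hab : Nat.gcd a b = 1) :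
    Subgroup.normalClosure {T ^ a} ⊔ Γ (a * b) = Γ a := by
  have hTa : T ^ a ∈ Γ a := (h3 a a ha).mpr dvd_rfl
  have hTb : T ^ b ∈ Γ b := (h3 b b hb).mpr dvd_rfl
  haveI := hnorm a
  haveI := hnorm b
  haveI := hnorm (a * b)
  set N := Subgroup.normalClosure {T ^ a} with hN
  haveI : N.Normal := Subgroup.normalClosure_normal
  have hNa : N ≤ Γ a :=
    Subgroup.normalClosure_le_normal (by simpa using hTa)
  have hTaN : T ^ a ∈ N := Subgroup.subset_normalClosure rfl
  have htop : N ⊔ Γ b = ⊤ := by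
    rw [← top_le_iff, ← h4]
    refine Subgroup.normalClosure_le_normal ?_
    intro x hx
    rw [Set.mem_singleton_iff] at hx
    rw [hx]
    obtain ⟨u, v, huv⟩ : ∃ u v : ℤ, (a : ℤ) * u + (b : ℤ) * v = 1 :=
      ⟨Nat.gcdA a b, Nat.gcdB a b, by
        have := Nat.gcd_eq_gcd_ab a b
        rw [hab] at this
        exact_mod_cast this.symm⟩
    have hx2 : T = (T ^ a) ^ u * (T ^ b) ^ v := by
      rw [← zpow_natCast T a, ← zpow_natCast T b, ← zpow_mul, ← zpow_mul, ← zpow_add, huv,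
        zpow_one]
    rw [SetLike.mem_coe, hx2]
    exact mul_mem (Subgroup.mem_sup_left (zpow_mem hTaN u))
      (Subgroup.mem_sup_right (zpow_mem hTb v))
  apply le_antisymm
  · exact sup_le hNa (h1 a b)
  · intro g hg
    have hg' : g ∈ (N : Set G) * (Γ b : Set G) := by
      rw [← Subgroup.mul_normal]
      have : g ∈ N ⊔ Γ b := by rw [htop]; exact Subgroup.mem_top g
      exact this
    obtain ⟨n, hn, γ, hγ, hmul⟩ := hg'
    have hγa : γ ∈ Γ a := by
      have hγeq : γ = n⁻¹ * g := by rw [← hmul]; group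
      rw [hγeq]
      exact mul_mem (inv_mem (hNa hn)) hg
    have hγab : γ ∈ Γ (a * b) := by
      rw [← h2 a b hab]
      exact ⟨hγa, hγ⟩
    rw [← hmul]
    exact mul_mem (Subgroup.mem_sup_left hn) (Subgroup.mem_sup_right hγab)
end

section
/- Let G be a group, T ∈ G, and Γ(a) ⊴ G (a ≥ 1) a family of normal subgroups satisfying: Γ(ab) ⊆ Γ(a); Γ(a) ∩ Γ(b) = Γ(ab) for gcd(a,b)=1; T^b ∈ Γ(a) iff a ∣ b; and G is the normal closure of T. Suppose Γ ≤ G contains Γ(b) for some b (i.e. Γ is a congruence group of level b), b is minimal with this property under divisibility (no proper divisor b' of b satisfies Γ(b') ⊆ Γ), and let a be a positive integer such that the normal closure of T^a is contained in Γ but for every proper divisor a' of a the normal closure of T^{a'} is not contained in Γ. Then a divides b, and every prime dividing b also divides a. -/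
/-- If a subgroup contains `T^m` and `T^n`, it contains `T^(gcd m n)`. -/
lemma pow_gcd_mem {G : Type*} [Group G] (H : Subgroup G) (T : G) (m n : ℕ)
    (hm : T ^ m ∈ H) (hn : T ^ n ∈ H) : T ^ (Nat.gcd m n) ∈ H := by
  have key := Nat.gcd_eq_gcd_ab m n
  have hz : T ^ ((Nat.gcd m n : ℤ)) = (T ^ m) ^ (Nat.gcdA m n) * (T ^ n) ^ (Nat.gcdB m n) := by
    rw [key, zpow_add, zpow_mul, zpow_mul, zpow_natCast, zpow_natCast]
  have : T ^ ((Nat.gcd m n : ℤ)) ∈ H := by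
    rw [hz]; exact H.mul_mem (H.zpow_mem hm _) (H.zpow_mem hn _)
  rwa [zpow_natCast] at this

theorem stmt_5 (G : Type*) [Group G] (T : G) (Γfam : ℕ → Subgroup G)
    (hnorm : ∀ c : ℕ, (Γfam c).Normal)
    (h1 : ∀ c d : ℕ, Γfam (c * d) ≤ Γfam c)
    (h2 : ∀ c d : ℕ, Nat.gcd c d = 1 → Γfam c ⊓ Γfam d = Γfam (c * d))
    (h3 : ∀ c d : ℕ, 1 ≤ c → (T ^ d ∈ Γfam c ↔ c ∣ d))
    (h4 : Subgroup.normalClosure {T} = ⊤)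
    (Γ : Subgroup G) (b : ℕ) (hb : 1 ≤ b)
    (hcong : Γfam b ≤ Γ)
    (hmin : ∀ b' : ℕ, b' ∣ b → b' ≠ b → ¬ Γfam b' ≤ Γ)
    (a : ℕ) (ha : 1 ≤ a)
    (hW1 : Subgroup.normalClosure {T ^ a} ≤ Γ)
    (hW2 : ∀ a' : ℕ, a' ∣ a → a' ≠ a → ¬ Subgroup.normalClosure {T ^ a'} ≤ Γ) :
    a ∣ b ∧ ∀ p : ℕ, p.Prime → p ∣ b → p ∣ a := by
  have hb0 : b ≠ 0 := by omega
  -- Part 1 : a ∣ b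
  have hab : a ∣ b := by
    set g := Nat.gcd a b with hg
    haveI := hnorm b
    set J : Subgroup G := Subgroup.normalClosure {T ^ a} ⊔ Γfam b with hJ
    have hTa : T ^ a ∈ J := by
      exact Subgroup.mem_sup_left (Subgroup.subset_normalClosure rfl)
    have hTb : T ^ b ∈ J := by
      exact Subgroup.mem_sup_right ((h3 b b hb).mpr dvd_rfl)
    have hTg : T ^ g ∈ J := pow_gcd_mem J T a b hTa hTb
    have hNg : Subgroup.normalClosure {T ^ g} ≤ Γ := by
      refine le_trans (Subgroup.normalClosure_le_normal ?_) (sup_le hW1 hcong)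
      intro x hx; rw [Set.mem_singleton_iff] at hx; subst hx; exact hTg
    have : g = a := by
      by_contra hne
      exact hW2 g (Nat.gcd_dvd_left a b) hne hNg
    rw [← this]; exact Nat.gcd_dvd_right a b
  -- Part 2 : primes of b divide a
  refine ⟨hab, fun p hp hpb => ?_⟩
  by_contra hpa
  set k := b.factorization p with hk
  set q := p ^ k with hq
  set b' := b / q with hb'
  have hmul : q * b' = b := Nat.ordProj_mul_ordCompl_eq_self b p
  have hb'pos : 0 < b' := Nat.ordCompl_pos p hb0
  have hpb' : ¬ p ∣ b' := Nat.not_dvd_ordCompl hp hb0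
  have hkpos : 0 < k := hp.factorization_pos_of_dvd hb0 hpb
  have hq1 : 1 < q := Nat.one_lt_pow hkpos.ne' hp.one_lt
  have hb'ne : b' ≠ b := by
    intro h
    rw [h] at hmul
    have : 1 * b < q * b := by
      exact Nat.mul_lt_mul_of_lt_of_le hq1 le_rfl (by omega)
    omega
  have hb'dvd : b' ∣ b := Nat.ordCompl_dvd b p
  -- N = normal closure of T^(a*b')
  set N : Subgroup G := Subgroup.normalClosure {T ^ (a * b')} with hN
  have hNΓ : N ≤ Γ := by
    refine le_trans (Subgroup.normalClosure_le_normal ?_) hW1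
    intro x hx; rw [Set.mem_singleton_iff] at hx; subst hx
    rw [pow_mul]
    exact (Subgroup.normalClosure {T ^ a}).pow_mem (Subgroup.subset_normalClosure rfl) b'
  haveI := hnorm b'
  haveI := hnorm q
  have hNb' : N ≤ Γfam b' := by
    apply Subgroup.normalClosure_le_normal
    intro x hx; rw [Set.mem_singleton_iff] at hx; subst hx
    exact (h3 b' (a * b') hb'pos).mpr ⟨a, mul_comm a b'⟩
  -- the join N ⊔ Γfam q is all of G
  have hcop : Nat.Coprime (a * b') q := by
    have h1' : Nat.Coprime p (a * b') :=
      Nat.Coprime.mul_right ((Nat.Prime.coprime_iff_not_dvd hp).mpr hpa)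
        ((Nat.Prime.coprime_iff_not_dvd hp).mpr hpb')
    exact (h1'.pow_left k).symm
  have htop : (⊤ : Subgroup G) ≤ N ⊔ Γfam q := by
    rw [← h4]
    apply Subgroup.normalClosure_le_normal
    rw [Set.singleton_subset_iff]
    have hTab' : T ^ (a * b') ∈ N ⊔ Γfam q :=
      Subgroup.mem_sup_left (Subgroup.subset_normalClosure rfl)
    have hTq : T ^ q ∈ N ⊔ Γfam q := by
      refine Subgroup.mem_sup_right ((h3 q q ?_).mpr dvd_rfl)
      exact Nat.one_le_iff_ne_zero.mpr (pow_ne_zero k hp.pos.ne')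
    have := pow_gcd_mem (N ⊔ Γfam q) T (a * b') q hTab' hTq
    rwa [hcop, pow_one] at this
  -- conclude Γfam b' ≤ Γ, contradicting minimality of b
  have hfinal : Γfam b' ≤ Γ := by
    intro x hx
    have hxJ : x ∈ N ⊔ Γfam q := htop (Subgroup.mem_top x)
    rw [← SetLike.mem_coe, Subgroup.mul_normal N (Γfam q)] at hxJ
    obtain ⟨n, hn, y, hy, hxy⟩ := hxJ
    have hyb' : y ∈ Γfam b' := by
      have : y = n⁻¹ * x := by rw [← hxy]; group
      rw [this]
      exact (Γfam b').mul_mem ((Γfam b').inv_mem (hNb' hn)) hx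
    have hyb : y ∈ Γfam b := by
      have hgcd : Nat.gcd q b' = 1 := (((Nat.Prime.coprime_iff_not_dvd hp).mpr hpb').pow_left k)
      have := h2 q b' hgcd
      rw [hmul] at this
      rw [← this]
      exact ⟨hy, hyb'⟩
    rw [← hxy]
    exact Γ.mul_mem (hNΓ hn) (hcong hyb)
  exact hmin b' hb'dvd hb'ne hfinal
end

section
/- Let n ≥ 5 be odd, a ≥ 2 with gcd(a, n) > 1, and let R̄² be the (n-1)×(n-1) matrix over ℤ/aℤ described in the context (the homological action of the rotation of the regular 2n-gon). Then there is no z ∈ (ℤ/aℤ)^{n-1} with z + R̄²·z = 2e₁. -/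
theorem stmt_7 (n a : ℕ) (hn : 5 ≤ n) (hodd : Odd n) (ha : 2 ≤ a)
    (hcop : 1 < Nat.gcd a n) (hn4 : n % 4 = 1)
    (M : Matrix (Fin (n-1)) (Fin (n-1)) (ZMod a))
    (hM : ∀ i j : Fin (n-1), M i j =
      if (j : ℕ) = (n-3)/2 then
        (if (i : ℕ) ≤ (n-3)/2 then (-1 : ZMod a) ^ ((i : ℕ) + 1) else (-1 : ZMod a) ^ (i : ℕ))
      else if (j : ℕ) = n - 2 then (if (i : ℕ) = 0 then -1 else 0)
      else (if (i : ℕ) = (j : ℕ) + 1 then 1 else 0)) :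
    ¬ ∃ z : Fin (n-1) → ZMod a,
      z + M.mulVec z = (fun i : Fin (n-1) => if (i : ℕ) = 0 then (2 : ZMod a) else 0) := by
  rintro ⟨z, hz⟩
  obtain ⟨k, hk⟩ : ∃ k, n = 4 * k + 1 := ⟨n / 4, by omega⟩
  have hk1 : 1 ≤ k := by omega
  have hm : (n - 3) / 2 = 2 * k - 1 := by omega
  have hn2 : n - 2 = 4 * k - 1 := by omega
  have hmN : 2 * k - 1 < n - 1 := by omega
  -- the special index
  set jm : Fin (n-1) := ⟨2 * k - 1, hmN⟩ with hjm
  -- coefficient vector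
  set c : Fin (n-1) → ZMod a :=
    fun i => if (i : ℕ) ≤ 2*k-1 then (-1)^(i:ℕ) else (-1)^((i:ℕ)+1) with hc
  -- pointwise equations
  have hz' : ∀ i : Fin (n-1), z i + ∑ j, M i j * z j
      = if (i : ℕ) = 0 then (2 : ZMod a) else 0 := by
    intro i
    have := congrFun hz i
    simpa [Matrix.mulVec, dotProduct] using this
  -- small helpers about powers of -1
  have hprod : ∀ t : ℕ, ((-1 : ZMod a))^t * (-1)^(t+1) = -1 := by
    intro t
    rw [← pow_add]
    exact Odd.neg_one_pow ⟨t, by ring⟩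
  have hsum0 : ∀ t : ℕ, ((-1 : ZMod a))^t + (-1)^(t+1) = 0 := by
    intro t; rw [pow_succ]; ring
  -- value of c at 0
  have hc0 : ∀ i : Fin (n-1), (i : ℕ) = 0 → c i = 1 := by
    intro i hi
    simp only [hc, hi]
    rw [if_pos (by omega)]
    simp
  -- the key sum
  have key : ∑ i, c i * (z i + ∑ j, M i j * z j) = 2 := by
    have h1 : ∀ i : Fin (n-1), c i * (z i + ∑ j, M i j * z j)
        = if i = (⟨0, by omega⟩ : Fin (n-1)) then 2 else 0 := by
      intro i
      rw [hz' i]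
      by_cases h : i = (⟨0, by omega⟩ : Fin (n-1))
      · subst h
        rw [hc0 _ rfl, one_mul]
        simp
      · have h0 : (i : ℕ) ≠ 0 := by
          intro h0; exact h (Fin.ext h0)
        rw [if_neg h0, if_neg h, mul_zero]
    rw [Finset.sum_congr rfl fun i _ => h1 i, Finset.sum_ite_eq' Finset.univ]
    simp
  -- rearrange the sum
  have expand : ∑ i, c i * (z i + ∑ j, M i j * z j)
      = ∑ j, (c j + ∑ i, c i * M i j) * z j := by
    calc ∑ i, c i * (z i + ∑ j, M i j * z j)
        = ∑ i, (c i * z i + ∑ j, c i * M i j * z j) := by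
          refine Finset.sum_congr rfl fun i _ => ?_
          rw [mul_add, Finset.mul_sum]
          simp [mul_assoc]
      _ = ∑ i, c i * z i + ∑ i, ∑ j, c i * M i j * z j := Finset.sum_add_distrib
      _ = ∑ j, c j * z j + ∑ j, ∑ i, c i * M i j * z j := by rw [Finset.sum_comm]
      _ = ∑ j, (c j + ∑ i, c i * M i j) * z j := by
          rw [← Finset.sum_add_distrib]
          refine Finset.sum_congr rfl fun j _ => ?_
          rw [add_mul, Finset.sum_mul]
  -- the coefficient at jm
  have coeff_m : c jm + ∑ i, c i * M i jm = -((n : ℕ) : ZMod a) := by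
    have h1 : ∀ i : Fin (n-1), c i * M i jm = -1 := by
      intro i
      rw [hM i jm]
      have : ((jm : Fin (n-1)) : ℕ) = (n-3)/2 := by simp [hjm, hm]
      rw [if_pos this]
      by_cases hi : (i : ℕ) ≤ (n-3)/2
      · rw [if_pos hi]
        simp only [hc]
        rw [if_pos (by omega)]
        exact hprod _
      · rw [if_neg hi]
        simp only [hc]
        rw [if_neg (by omega)]
        rw [mul_comm]
        exact hprod _
    rw [Finset.sum_congr rfl fun i _ => h1 i]
    have hcm : c jm = -1 := by
      simp only [hc, hjm]
      rw [if_pos le_rfl]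
      exact Odd.neg_one_pow ⟨k - 1, by omega⟩
    rw [hcm]
    rw [Finset.sum_const, Finset.card_univ, Fintype.card_fin]
    have hcast : ((n - 1 : ℕ) : ZMod a) = (n : ZMod a) - 1 := by
      have : (n : ℕ) = (n - 1) + 1 := by omega
      rw [this]; push_cast; ring
    rw [nsmul_eq_mul, hcast]
    ring
  -- the coefficient elsewhere is 0
  have coeff_other : ∀ j : Fin (n-1), j ≠ jm → c j + ∑ i, c i * M i j = 0 := by
    intro j hj
    have hjv : (j : ℕ) ≠ 2 * k - 1 := by
      intro h; exact hj (Fin.ext h)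
    by_cases hlast : (j : ℕ) = n - 2
    · -- last column
      have h1 : ∀ i : Fin (n-1), c i * M i j
          = if i = (⟨0, by omega⟩ : Fin (n-1)) then -c i else 0 := by
        intro i
        rw [hM i j]
        rw [if_neg (by omega), if_pos hlast]
        by_cases h : i = (⟨0, by omega⟩ : Fin (n-1))
        · subst h; rw [if_pos rfl, if_pos rfl]; ring
        · have h0 : (i : ℕ) ≠ 0 := fun h0 => h (Fin.ext h0)
          rw [if_neg h0, if_neg h, mul_zero]
      rw [Finset.sum_congr rfl fun i _ => h1 i, Finset.sum_ite_eq' Finset.univ]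
      rw [if_pos (Finset.mem_univ _), hc0 ⟨0, by omega⟩ rfl]
      have hcj : c j = 1 := by
        simp only [hc]
        rw [if_neg (by omega)]
        have : (j : ℕ) + 1 = 4 * k := by omega
        rw [this]
        exact Even.neg_one_pow ⟨2 * k, by ring⟩
      rw [hcj]; ring
    · -- shift column
      have hjlt : (j : ℕ) + 1 < n - 1 := by
        have := j.isLt; omega
      have h1 : ∀ i : Fin (n-1), c i * M i j
          = if i = (⟨(j : ℕ) + 1, hjlt⟩ : Fin (n-1)) then c i else 0 := by
        intro i
        rw [hM i j]
        rw [if_neg (by omega), if_neg hlast]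
        by_cases h : i = (⟨(j : ℕ) + 1, hjlt⟩ : Fin (n-1))
        · subst h; rw [if_pos rfl, if_pos rfl, mul_one]
        · have h0 : (i : ℕ) ≠ (j : ℕ) + 1 := fun h0 => h (Fin.ext h0)
          rw [if_neg h0, if_neg h, mul_zero]
      rw [Finset.sum_congr rfl fun i _ => h1 i, Finset.sum_ite_eq' Finset.univ]
      rw [if_pos (Finset.mem_univ _)]
      simp only [hc]
      by_cases hlt : (j : ℕ) < 2 * k - 1
      · rw [if_pos (by omega), if_pos (by omega)]
        exact hsum0 _
      · rw [if_neg (by omega), if_neg (by omega)]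
        exact hsum0 _
  -- conclude the single-term value
  have single : ∑ j, (c j + ∑ i, c i * M i j) * z j
      = (c jm + ∑ i, c i * M i jm) * z jm :=
    Finset.sum_eq_single jm (fun b _ hb => by rw [coeff_other b hb, zero_mul])
      (fun h => absurd (Finset.mem_univ jm) h)
  have main : -((n : ℕ) : ZMod a) * z jm = 2 := by
    rw [← coeff_m, ← single, ← expand]
    exact key
  -- derive contradiction via gcd
  set d := Nat.gcd a n with hd
  have hda : d ∣ a := Nat.gcd_dvd_left a n
  have hdn : d ∣ n := Nat.gcd_dvd_right a n
  haveI : NeZero d := ⟨by omega⟩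
  have hmap := congrArg (ZMod.castHom hda (ZMod d)) main
  rw [map_mul, map_neg, map_natCast, map_ofNat] at hmap
  have hn0 : ((n : ℕ) : ZMod d) = 0 := (ZMod.natCast_eq_zero_iff n d).mpr hdn
  rw [hn0] at hmap
  simp only [neg_zero, zero_mul] at hmap
  have h2 : ((2 : ℕ) : ZMod d) = 0 := by
    push_cast
    exact hmap.symm
  have hd2 : d ∣ 2 := (ZMod.natCast_eq_zero_iff 2 d).mp h2
  have hle : d ≤ 2 := Nat.le_of_dvd (by norm_num) hd2
  have : d = 2 := by omega
  rw [this] at hdn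
  obtain ⟨t, ht⟩ := hdn
  have ho := Nat.odd_iff.mp hodd
  omega
end

section
/- Let G be a group with element T and normal subgroups Γ(m) = ker φ_m as in the axiomatic congruence setting (Γ(ab) ⊆ Γ(a); Γ(a) ∩ Γ(b) = Γ(ab) for coprime a,b; T^b ∈ Γ(a) iff a ∣ b; G is the normal closure of T). Let gcd(a, b) = 1 and let G(m) denote the normal closure of T^m in G. Then φ_b(G(a)) = φ_b(G), where φ_b : G → G/Γ(b) is the quotient map. -/
set_option maxHeartbeats 1000000 in
theorem stmt_10 (G : Type*) [Group G] (T : G) (Γ : ℕ → Subgroup G)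
    [hnorm : ∀ c : ℕ, (Γ c).Normal]
    (h1 : ∀ c d : ℕ, Γ (c * d) ≤ Γ c)
    (h2 : ∀ c d : ℕ, Nat.gcd c d = 1 → Γ c ⊓ Γ d = Γ (c * d))
    (h3 : ∀ c d : ℕ, 1 ≤ c → (T ^ d ∈ Γ c ↔ c ∣ d))
    (h4 : Subgroup.normalClosure {T} = ⊤)
    (a b : ℕ) (ha : 1 ≤ a) (hb : 1 ≤ b) (hab : Nat.gcd a b = 1) :
    Subgroup.map (QuotientGroup.mk' (Γ b)) (Subgroup.normalClosure {T ^ a}) =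
      Subgroup.map (QuotientGroup.mk' (Γ b)) ⊤ := by
  set φ := QuotientGroup.mk' (Γ b) with hφ
  -- T^b is killed by φ
  have hTb : φ (T ^ b) = 1 := by
    rw [← MonoidHom.mem_ker, QuotientGroup.ker_mk']
    exact (h3 b b hb).mpr dvd_rfl
  -- Bezout
  set x := Nat.gcdA a b with hx
  set y := Nat.gcdB a b with hy
  have hbez : (1 : ℤ) = a * x + b * y := by
    have := Nat.gcd_eq_gcd_ab a b
    rw [hab] at this
    exact_mod_cast this
  -- φ T is a power of φ (T^a)
  have hT : φ T = (φ (T ^ a)) ^ x := by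
    have : T = (T ^ a) ^ x * (T ^ b) ^ y := by
      rw [← zpow_natCast T a, ← zpow_natCast T b, ← zpow_mul, ← zpow_mul,
        ← zpow_add, ← hbez, zpow_one]
    calc φ T = φ ((T ^ a) ^ x * (T ^ b) ^ y) := by rw [← this]
      _ = (φ (T ^ a)) ^ x * (φ (T ^ b)) ^ y := by
          rw [map_mul, map_zpow, map_zpow]
      _ = (φ (T ^ a)) ^ x := by rw [hTb, one_zpow, mul_one]
  have hmem : φ T ∈ Subgroup.map φ (Subgroup.normalClosure {T ^ a}) := by
    rw [hT]
    have hTa : φ (T ^ a) ∈ Subgroup.map φ (Subgroup.normalClosure {T ^ a}) :=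
      Subgroup.mem_map_of_mem φ (Subgroup.subset_normalClosure (Set.mem_singleton _))
    exact zpow_mem hTa x
  -- the image is normal since φ is surjective
  have hsurj : Function.Surjective φ := QuotientGroup.mk'_surjective (Γ b)
  haveI : (Subgroup.map φ (Subgroup.normalClosure {T ^ a})).Normal :=
    Subgroup.Normal.map inferInstance φ hsurj
  haveI : (Subgroup.comap φ (Subgroup.map φ (Subgroup.normalClosure {T ^ a}))).Normal :=
    Subgroup.Normal.comap inferInstance φ
  have hle : Subgroup.normalClosure {T} ≤
      Subgroup.comap φ (Subgroup.map φ (Subgroup.normalClosure {T ^ a})) := by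
    apply Subgroup.normalClosure_le_normal
    intro g hg
    rw [Set.mem_singleton_iff] at hg
    subst hg
    exact hmem
  apply le_antisymm
  · exact Subgroup.map_mono le_top
  · rw [← h4]
    exact le_trans (Subgroup.map_mono hle) (Subgroup.map_comap_le φ _)
end

section
/- Let G be a group with element T satisfying the congruence axioms of the context, and let Γ ≤ G be a finite index subgroup with generalised Wohlfahrt level l = a·b where gcd(a,b) = 1. Suppose Γ contains elements (A⁻¹TA)^{m₁} and ((RA)⁻¹TRA)^{m₂} with lcm(m₁,m₂) ∣ a, and elements (B⁻¹TB)^{m₁'} and ((RB)⁻¹TRB)^{m₂'} with lcm(m₁',m₂') ∣ b, where A, B, R ∈ G and where for every S ∈ G the pair {S⁻¹TS, (RS)⁻¹TRS} generates G. If Γ ≠ G, then Γ contains no subgroup Γ(c) for any c ≥ 1, i.e. Γ is not a congruence group. -/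
lemma conjpow {G : Type*} [Group G] (S T : G) (k : ℕ) :
    (S⁻¹ * T * S) ^ k = S⁻¹ * T ^ k * S := by
  have := conj_pow (i := k) (a := S⁻¹) (b := T)
  simpa using this

lemma natSplit (a b c : ℕ) (hc : 0 < c) (hab : Nat.Coprime a b)
    (hac : a ∣ c) (hbc : b ∣ c) :
    ∃ a₁ b₁ : ℕ, a₁ * b₁ = c ∧ a ∣ a₁ ∧ b ∣ b₁ ∧ Nat.Coprime a₁ b₁ ∧
      Nat.Coprime a b₁ ∧ Nat.Coprime b a₁ ∧ 0 < a₁ ∧ 0 < b₁ := by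
  set a₁ := Nat.gcd c (a ^ c) with ha₁def
  have ha₁c : a₁ ∣ c := Nat.gcd_dvd_left _ _
  have ha₁pow : a₁ ∣ a ^ c := Nat.gcd_dvd_right _ _
  have ha₁pos : 0 < a₁ := Nat.pos_of_ne_zero (by
    intro h
    exact absurd (Nat.eq_zero_of_gcd_eq_zero_left h) (by omega))
  set b₁ := c / a₁ with hb₁def
  have hmul : a₁ * b₁ = c := Nat.mul_div_cancel' ha₁c
  have hb₁pos : 0 < b₁ := by
    rcases Nat.eq_zero_or_pos b₁ with h | h
    · rw [h, Nat.mul_zero] at hmul; omega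
    · exact h
  have haa₁ : a ∣ a₁ := Nat.dvd_gcd hac (dvd_pow_self a (by omega))
  have hcop : Nat.Coprime a₁ b₁ := by
    rw [Nat.coprime_iff_gcd_eq_one]
    by_contra h
    obtain ⟨p, hp, hpd⟩ := Nat.exists_prime_and_dvd h
    have hpa₁ : p ∣ a₁ := hpd.trans (Nat.gcd_dvd_left _ _)
    have hpb₁ : p ∣ b₁ := hpd.trans (Nat.gcd_dvd_right _ _)
    have hpa : p ∣ a := hp.dvd_of_dvd_pow (hpa₁.trans ha₁pow)
    set k := a₁.factorization p with hk
    have hk1 : p ^ k ∣ a₁ := Nat.ordProj_dvd a₁ p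
    have hk2 : ¬ p ^ (k + 1) ∣ a₁ := Nat.pow_succ_factorization_not_dvd (by omega) hp
    have hdc : p ^ (k + 1) ∣ c := by
      rw [← hmul, pow_succ]
      exact mul_dvd_mul hk1 hpb₁
    have hpk_le : p ^ k ≤ c := Nat.le_of_dvd hc (hk1.trans ha₁c)
    have hklt : k < c := by
      have h2k : k < 2 ^ k := Nat.lt_two_pow_self (n := k)
      have : 2 ^ k ≤ p ^ k := Nat.pow_le_pow_left hp.two_le k
      omega
    have hdpow : p ^ (k + 1) ∣ a ^ c := by
      calc p ^ (k+1) ∣ p ^ c := pow_dvd_pow p (by omega)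
        _ ∣ a ^ c := pow_dvd_pow_of_dvd hpa c
    exact hk2 (Nat.dvd_gcd hdc hdpow)
  have hba₁ : Nat.Coprime b a₁ :=
    Nat.Coprime.coprime_dvd_right ha₁pow ((Nat.coprime_comm.mp hab).pow_right c)
  have hab₁ : Nat.Coprime a b₁ := Nat.Coprime.coprime_dvd_left haa₁ hcop
  have hbb₁ : b ∣ b₁ := Nat.Coprime.dvd_of_dvd_mul_left hba₁ (hmul ▸ hbc)
  exact ⟨a₁, b₁, hmul, haa₁, hbb₁, hcop, hab₁, hba₁, ha₁pos, hb₁pos⟩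

lemma key {G : Type*} [Group G] (T R A : G) (Γ N M : Subgroup G)
    (hN : N.Normal) (hM : M.Normal)
    (hNM : M ⊓ N ≤ Γ)
    (a a₁ b₁ : ℕ) (haa₁ : a ∣ a₁)
    (hTa₁M : T ^ a₁ ∈ M)
    (hTb₁N : T ^ b₁ ∈ N)
    (hA1 : A⁻¹ * T ^ a * A ∈ Γ)
    (hA2 : (R * A)⁻¹ * T ^ a * (R * A) ∈ Γ)
    (hgenA : Subgroup.closure {A⁻¹ * T * A, (R * A)⁻¹ * T * (R * A)} = ⊤)
    (hab₁ : Nat.Coprime a b₁) :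
    ∀ S : G, S⁻¹ * T ^ a₁ * S ∈ Γ := by
  -- Step 1: Γ ⊔ N = ⊤
  have bez : (1 : ℤ) = a * Nat.gcdA a b₁ + b₁ * Nat.gcdB a b₁ := by
    have := Nat.gcd_eq_gcd_ab a b₁
    rwa [hab₁] at this
  have hmemtop : ∀ S' : G, S'⁻¹ * T ^ a * S' ∈ Γ → S'⁻¹ * T * S' ∈ Γ ⊔ N := by
    intro S' hS'
    have h1 : (S'⁻¹ * T * S') ^ a ∈ Γ ⊔ N := by
      rw [conjpow]; exact Subgroup.mem_sup_left hS'
    have h2 : (S'⁻¹ * T * S') ^ b₁ ∈ Γ ⊔ N := by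
      rw [conjpow]
      exact Subgroup.mem_sup_right (by simpa using hN.conj_mem _ hTb₁N S'⁻¹)
    have : (S'⁻¹ * T * S') = ((S'⁻¹ * T * S') ^ a) ^ (Nat.gcdA a b₁) *
        ((S'⁻¹ * T * S') ^ b₁) ^ (Nat.gcdB a b₁) := by
      rw [← zpow_natCast _ a, ← zpow_natCast _ b₁, ← zpow_mul, ← zpow_mul, ← zpow_add]
      rw [← bez, zpow_one]
    rw [this]
    exact mul_mem (Subgroup.zpow_mem _ h1 _) (Subgroup.zpow_mem _ h2 _)
  have hsup : Γ ⊔ N = ⊤ := by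
    rw [← top_le_iff, ← hgenA, Subgroup.closure_le]
    rintro x (rfl | rfl)
    · exact hmemtop A hA1
    · exact hmemtop (R * A) hA2
  -- commutator fact
  have hw : ∀ n ∈ N, (T ^ a₁)⁻¹ * (n⁻¹ * T ^ a₁ * n) ∈ Γ := by
    intro n hn
    refine hNM (Subgroup.mem_inf.mpr ⟨?_, ?_⟩)
    · exact mul_mem (inv_mem hTa₁M) (by simpa using hM.conj_mem _ hTa₁M n⁻¹)
    · have : (T ^ a₁)⁻¹ * (n⁻¹ * T ^ a₁ * n) =
        ((T ^ a₁)⁻¹ * n⁻¹ * ((T ^ a₁)⁻¹)⁻¹) * n := by group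
      rw [this]
      exact mul_mem (hN.conj_mem _ (inv_mem hn) _) hn
  -- decomposition of arbitrary elements
  have hdecomp : ∀ S : G, ∃ n ∈ N, ∃ γ ∈ Γ, S = n * γ := by
    intro S
    have : S ∈ ((N ⊔ Γ : Subgroup G) : Set G) := by
      rw [sup_comm] at hsup
      rw [hsup]; trivial
    rw [Subgroup.normal_mul] at this
    obtain ⟨n, hn, γ, hγ, rfl⟩ := this
    exact ⟨n, hn, γ, hγ, rfl⟩
  -- T^a₁ ∈ Γ
  obtain ⟨n, hn, γ, hγ, hAeq⟩ := hdecomp A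
  have hnTan : n⁻¹ * T ^ a * n ∈ Γ := by
    have : n⁻¹ * T ^ a * n = γ * (A⁻¹ * T ^ a * A) * γ⁻¹ := by
      rw [hAeq]; group
    rw [this]
    exact mul_mem (mul_mem hγ hA1) (inv_mem hγ)
  obtain ⟨q, hq⟩ := haa₁
  have hnTa₁n : n⁻¹ * T ^ a₁ * n ∈ Γ := by
    have : n⁻¹ * T ^ a₁ * n = (n⁻¹ * T ^ a * n) ^ q := by
      rw [conjpow, ← pow_mul, ← hq]
    rw [this]
    exact pow_mem hnTan q
  have hTa₁Γ : T ^ a₁ ∈ Γ := by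
    have h := hw n hn
    have : T ^ a₁ = (n⁻¹ * T ^ a₁ * n) * ((T ^ a₁)⁻¹ * (n⁻¹ * T ^ a₁ * n))⁻¹ := by group
    rw [this]
    exact mul_mem hnTa₁n (inv_mem h)
  -- conclusion
  intro S
  obtain ⟨n', hn', γ', hγ', rfl⟩ := hdecomp S
  have h1 : n'⁻¹ * T ^ a₁ * n' ∈ Γ := by
    have h := hw n' hn'
    have : n'⁻¹ * T ^ a₁ * n' = T ^ a₁ * ((T ^ a₁)⁻¹ * (n'⁻¹ * T ^ a₁ * n')) := by group
    rw [this]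
    exact mul_mem hTa₁Γ h
  have : (n' * γ')⁻¹ * T ^ a₁ * (n' * γ') = γ'⁻¹ * (n'⁻¹ * T ^ a₁ * n') * γ' := by group
  rw [this]
  exact mul_mem (mul_mem (inv_mem hγ') h1) hγ'

theorem stmt_11 (G : Type*) [Group G] (T R : G) (Γfam : ℕ → Subgroup G)
    (hnorm : ∀ c : ℕ, (Γfam c).Normal)
    (h1 : ∀ c d : ℕ, Γfam (c * d) ≤ Γfam c)
    (h2 : ∀ c d : ℕ, Nat.gcd c d = 1 → Γfam c ⊓ Γfam d = Γfam (c * d))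
    (h3 : ∀ c d : ℕ, 1 ≤ c → (T ^ d ∈ Γfam c ↔ c ∣ d))
    (hgen : ∀ S : G, Subgroup.closure {S⁻¹ * T * S, (R * S)⁻¹ * T * (R * S)} = ⊤)
    (Γ : Subgroup G) (hfi : Γ.FiniteIndex) (hΓne : Γ ≠ ⊤)
    (kf : G → ℕ)
    (hkf : ∀ S : G, 0 < kf S ∧ S⁻¹ * T ^ (kf S) * S ∈ Γ ∧
      ∀ j : ℕ, 0 < j → S⁻¹ * T ^ j * S ∈ Γ → kf S ≤ j)
    (l a b : ℕ) (hl : l = a * b) (hab : Nat.gcd a b = 1)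
    (hlcm1 : ∀ S : G, kf S ∣ l)
    (hlcm2 : ∀ l' : ℕ, 0 < l' → (∀ S : G, kf S ∣ l') → l ∣ l')
    (A B : G) (m₁ m₂ m₁' m₂' : ℕ)
    (hm : 0 < m₁ ∧ 0 < m₂ ∧ 0 < m₁' ∧ 0 < m₂')
    (hA1 : (A⁻¹ * T * A) ^ m₁ ∈ Γ)
    (hA2 : ((R * A)⁻¹ * T * (R * A)) ^ m₂ ∈ Γ)
    (hB1 : (B⁻¹ * T * B) ^ m₁' ∈ Γ)
    (hB2 : ((R * B)⁻¹ * T * (R * B)) ^ m₂' ∈ Γ)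
    (hma : Nat.lcm m₁ m₂ ∣ a) (hmb : Nat.lcm m₁' m₂' ∣ b) :
    ∀ c : ℕ, 1 ≤ c → ¬ Γfam c ≤ Γ := by
  intro c hc hsub
  have hc0 : 0 < c := hc
  -- the minimal exponent divides any valid exponent
  have kdvd : ∀ (S : G) (j : ℕ), 0 < j → S⁻¹ * T ^ j * S ∈ Γ → kf S ∣ j := by
    intro S j hj hmem
    obtain ⟨hk0, hkmem, hmin⟩ := hkf S
    set k := kf S with hkdef
    rcases Nat.eq_zero_or_pos (j % k) with hr | hr
    · exact Nat.dvd_of_mod_eq_zero hr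
    · exfalso
      have hdm : k * (j / k) + j % k = j := Nat.div_add_mod j k
      rw [← hdm] at hmem
      have hrmem : S⁻¹ * T ^ (j % k) * S ∈ Γ := by
        have heq : S⁻¹ * T ^ (j % k) * S =
            ((S⁻¹ * T ^ k * S) ^ (j / k))⁻¹ * (S⁻¹ * T ^ (k * (j / k) + j % k) * S) := by
          rw [conjpow, pow_add, pow_mul]
          group
        rw [heq]
        exact mul_mem (inv_mem (pow_mem hkmem _)) hmem
      have := hmin (j % k) hr hrmem
      have := Nat.mod_lt j hk0
      omega
  -- membership from divisibility
  have hdvd_mem : ∀ (S : G) (d : ℕ), kf S ∣ d → S⁻¹ * T ^ d * S ∈ Γ := by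
    rintro S d ⟨t, rfl⟩
    rw [pow_mul, ← conjpow]
    exact pow_mem ((hkf S).2.1) t
  -- l divides c
  have hTc : T ^ c ∈ Γfam c := (h3 c c hc).mpr dvd_rfl
  have hkc : ∀ S : G, kf S ∣ c := by
    intro S
    refine kdvd S c hc0 (hsub ?_)
    simpa using (hnorm c).conj_mem _ hTc S⁻¹
  have hlc : l ∣ c := hlcm2 c hc0 hkc
  have hlne : l ≠ 0 := by
    intro h
    rw [h] at hlc
    omega
  have ha0 : 0 < a := by
    rcases Nat.eq_zero_or_pos a with h | h
    · exfalso; apply hlne; rw [hl, h, Nat.zero_mul]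
    · exact h
  have hb0 : 0 < b := by
    rcases Nat.eq_zero_or_pos b with h | h
    · exfalso; apply hlne; rw [hl, h, Nat.mul_zero]
    · exact h
  have hac : a ∣ c := (hl ▸ Dvd.intro b rfl).trans hlc
  have hbc : b ∣ c := (hl ▸ Dvd.intro_left a rfl).trans hlc
  -- the four conjugated powers of T^a, T^b in Γ
  have hkA : kf A ∣ a :=
    (kdvd A m₁ hm.1 (by rw [← conjpow]; exact hA1)).trans
      ((Nat.dvd_lcm_left m₁ m₂).trans hma)
  have hkRA : kf (R * A) ∣ a :=
    (kdvd (R * A) m₂ hm.2.1 (by rw [← conjpow]; exact hA2)).trans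
      ((Nat.dvd_lcm_right m₁ m₂).trans hma)
  have hkB : kf B ∣ b :=
    (kdvd B m₁' hm.2.2.1 (by rw [← conjpow]; exact hB1)).trans
      ((Nat.dvd_lcm_left m₁' m₂').trans hmb)
  have hkRB : kf (R * B) ∣ b :=
    (kdvd (R * B) m₂' hm.2.2.2 (by rw [← conjpow]; exact hB2)).trans
      ((Nat.dvd_lcm_right m₁' m₂').trans hmb)
  have hAa : A⁻¹ * T ^ a * A ∈ Γ := hdvd_mem A a hkA
  have hRAa : (R * A)⁻¹ * T ^ a * (R * A) ∈ Γ := hdvd_mem (R * A) a hkRA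
  have hBb : B⁻¹ * T ^ b * B ∈ Γ := hdvd_mem B b hkB
  have hRBb : (R * B)⁻¹ * T ^ b * (R * B) ∈ Γ := hdvd_mem (R * B) b hkRB
  -- A-side splitting: b = 1
  obtain ⟨a₁, b₁, hmul, haa₁, hbb₁, hcop, hab₁, hba₁, ha₁pos, hb₁pos⟩ :=
    natSplit a b c hc0 hab hac hbc
  have hNM1 : Γfam a₁ ⊓ Γfam b₁ ≤ Γ := by
    rw [h2 a₁ b₁ hcop, hmul]; exact hsub
  have hallA : ∀ S : G, S⁻¹ * T ^ a₁ * S ∈ Γ :=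
    key T R A Γ (Γfam b₁) (Γfam a₁) (hnorm b₁) (hnorm a₁) hNM1 a a₁ b₁ haa₁
      ((h3 a₁ a₁ ha₁pos).mpr dvd_rfl) ((h3 b₁ b₁ hb₁pos).mpr dvd_rfl)
      hAa hRAa (hgen A) hab₁
  have hla₁ : l ∣ a₁ := hlcm2 a₁ ha₁pos (fun S => kdvd S a₁ ha₁pos (hallA S))
  have hbone : b = 1 := by
    have hba₁dvd : b ∣ a₁ := (hl ▸ Dvd.intro_left a rfl).trans hla₁
    exact Nat.dvd_one.mp (hba₁ ▸ Nat.dvd_gcd dvd_rfl hba₁dvd)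
  -- B-side splitting: a = 1
  obtain ⟨b₂, a₂, hmul2, hbb₂, haa₂, hcop2, hba₂, hab₂, hb₂pos, ha₂pos⟩ :=
    natSplit b a c hc0 (Nat.coprime_comm.mp hab) hbc hac
  have hNM2 : Γfam b₂ ⊓ Γfam a₂ ≤ Γ := by
    rw [h2 b₂ a₂ hcop2, hmul2]; exact hsub
  have hallB : ∀ S : G, S⁻¹ * T ^ b₂ * S ∈ Γ :=
    key T R B Γ (Γfam a₂) (Γfam b₂) (hnorm a₂) (hnorm b₂) hNM2 b b₂ a₂ hbb₂
      ((h3 b₂ b₂ hb₂pos).mpr dvd_rfl) ((h3 a₂ a₂ ha₂pos).mpr dvd_rfl)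
      hBb hRBb (hgen B) hba₂
  have hlb₂ : l ∣ b₂ := hlcm2 b₂ hb₂pos (fun S => kdvd S b₂ hb₂pos (hallB S))
  have haone : a = 1 := by
    have hab₂dvd : a ∣ b₂ := (hl ▸ Dvd.intro b rfl).trans hlb₂
    exact Nat.dvd_one.mp (hab₂ ▸ Nat.dvd_gcd dvd_rfl hab₂dvd)
  -- so l = 1 and Γ = ⊤, contradiction
  have hl1 : l = 1 := by rw [hl, haone, hbone]
  have hall : ∀ S : G, S⁻¹ * T * S ∈ Γ := by
    intro S
    have := hdvd_mem S 1 (hl1 ▸ hlcm1 S)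
    simpa using this
  have htop : Subgroup.closure {(1 : G)⁻¹ * T * 1, (R * 1)⁻¹ * T * (R * 1)} ≤ Γ := by
    rw [Subgroup.closure_le]
    rintro x (rfl | rfl)
    · exact hall 1
    · exact hall (R * 1)
  rw [hgen 1] at htop
  exact hΓne (top_le_iff.mp htop)
end

section
/- Let F_n be a free group with basis x₀, ..., x_{n-1} (n ≥ 5 odd), and let γ : F_n → F_n be the automorphism defined by γ(x_i) = x_{i+1} for 0 ≤ i ≤ n-2 and γ(x_{n-1}) = x₀⁻¹. Let c₁ = x₀x₁⁻¹x₂⋯x_{n-3}x_{n-2}⁻¹x_{n-1} and c₂ = x₀⁻¹x₁x₂⁻¹⋯x_{n-3}⁻¹x_{n-2}x_{n-1}⁻¹. Then γ(c₁) = x₀ c₂ x₀⁻¹ and γ(c₂) = x₀⁻¹ c₁ x₀. -/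
theorem stmt_12 (n : ℕ) [NeZero n] (hn : 5 ≤ n) (hodd : Odd n)
    (γ : FreeGroup (Fin n) →* FreeGroup (Fin n))
    (hγ : ∀ i : Fin n, γ (FreeGroup.of i) =
      if (i : ℕ) = n - 1 then (FreeGroup.of (0 : Fin n))⁻¹ else FreeGroup.of (i + 1))
    (c₁ c₂ : FreeGroup (Fin n))
    (hc₁ : c₁ = ((List.range n).map
      (fun i => (FreeGroup.of (Fin.ofNat n (i : ℕ))) ^ ((-1 : ℤ) ^ i))).prod)
    (hc₂ : c₂ = ((List.range n).map
      (fun i => (FreeGroup.of (Fin.ofNat n (i : ℕ))) ^ ((-1 : ℤ) ^ (i + 1)))).prod) :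
    γ c₁ = FreeGroup.of (0 : Fin n) * c₂ * (FreeGroup.of (0 : Fin n))⁻¹ ∧
    γ c₂ = (FreeGroup.of (0 : Fin n))⁻¹ * c₁ * FreeGroup.of (0 : Fin n) := by
  obtain ⟨m, rfl⟩ : ∃ m, n = m + 1 :=
    ⟨n - 1, (Nat.succ_pred_eq_of_pos (Nat.pos_of_ne_zero (NeZero.ne n))).symm⟩
  have hme : Even m := by
    rcases hodd with ⟨k, hk⟩; exact ⟨k, by omega⟩
  have hγf : ∀ i, i < m → ∀ e : ℤ,
      γ (FreeGroup.of (Fin.ofNat (m+1) (i : ℕ)) ^ e)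
        = FreeGroup.of (Fin.ofNat (m+1) (i+1 : ℕ)) ^ e := by
    intro i hi e
    rw [map_zpow, hγ]
    have h1 : ((Fin.ofNat (m+1) (i : ℕ)) : ℕ) = i := by rw [Fin.val_ofNat]; exact Nat.mod_eq_of_lt (by omega)
    rw [if_neg (by rw [h1]; omega)]
    congr 2
    apply Fin.ext
    rw [Fin.val_add, h1, Fin.val_ofNat]
    congr 1
    show i + 1 % (m+1) = i + 1
    rw [Nat.mod_eq_of_lt (by omega : 1 < m+1)]
  have hlast : ∀ e : ℤ,
      γ (FreeGroup.of (Fin.ofNat (m+1) (m : ℕ)) ^ e)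
        = ((FreeGroup.of (0 : Fin (m+1)))⁻¹) ^ e := by
    intro e
    rw [map_zpow, hγ]
    have h1 : ((Fin.ofNat (m+1) (m : ℕ)) : ℕ) = m := by rw [Fin.val_ofNat]; exact Nat.mod_eq_of_lt (by omega)
    rw [if_pos (by rw [h1]; omega)]
  -- middle products
  set L₁ : FreeGroup (Fin (m+1)) :=
    ((List.range m).map
      (fun i => FreeGroup.of (Fin.ofNat (m+1) (i+1 : ℕ)) ^ ((-1 : ℤ) ^ i))).prod with hL₁
  set L₂ : FreeGroup (Fin (m+1)) :=
    ((List.range m).map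
      (fun i => FreeGroup.of (Fin.ofNat (m+1) (i+1 : ℕ)) ^ ((-1 : ℤ) ^ (i+1)))).prod with hL₂
  have hγc₁ : γ c₁ = L₁ * (FreeGroup.of (0 : Fin (m+1)))⁻¹ := by
    rw [hc₁, List.range_succ, List.map_append, List.prod_append, map_mul]
    rw [List.map_singleton, List.prod_singleton, hlast]
    have : ((-1 : ℤ)) ^ m = 1 := hme.neg_one_pow
    rw [this, zpow_one]
    congr 1
    rw [map_list_prod, List.map_map, hL₁]
    congr 1
    apply List.map_congr_left
    intro i hi
    simp only [Function.comp_apply]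
    exact hγf i (List.mem_range.mp hi) _
  have hγc₂ : γ c₂ = L₂ * (FreeGroup.of (0 : Fin (m+1))) := by
    rw [hc₂, List.range_succ, List.map_append, List.prod_append, map_mul]
    rw [List.map_singleton, List.prod_singleton, hlast]
    have : ((-1 : ℤ)) ^ (m+1) = -1 := by
      rw [pow_succ, hme.neg_one_pow]; ring
    rw [this]
    norm_num
    rw [map_list_prod, List.map_map, hL₂]
    congr 1
    apply List.map_congr_left
    intro i hi
    simp only [Function.comp_apply]
    exact hγf i (List.mem_range.mp hi) _
  have hc₂' : c₂ = (FreeGroup.of (0 : Fin (m+1)))⁻¹ * L₁ := by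
    rw [hc₂, List.range_succ_eq_map, List.map_cons, List.prod_cons, List.map_map]
    have ht : (List.map ((fun i => FreeGroup.of (Fin.ofNat (m+1) (i : ℕ)) ^ ((-1:ℤ)) ^ (i + 1)) ∘ Nat.succ)
        (List.range m)).prod = L₁ := by
      rw [hL₁]
      congr 1
      apply List.map_congr_left
      intro i hi
      simp only [Function.comp_apply, Nat.succ_eq_add_one]
      congr 1
      ring
    rw [ht]
    norm_num
  have hc₁' : c₁ = (FreeGroup.of (0 : Fin (m+1))) * L₂ := by
    rw [hc₁, List.range_succ_eq_map, List.map_cons, List.prod_cons, List.map_map]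
    have ht : (List.map ((fun i => FreeGroup.of (Fin.ofNat (m+1) (i : ℕ)) ^ ((-1:ℤ)) ^ i) ∘ Nat.succ)
        (List.range m)).prod = L₂ := by
      rw [hL₂]
      congr 1
    rw [ht]
    norm_num
  constructor
  · rw [hγc₁, hc₂']; group
  · rw [hγc₂, hc₁']; group
end

section
/- Let n ≥ 5 be odd and let T̄ be the (n-1)×(n-1) integer matrix given blockwise by: T̄ e_{j+1} = 2∑_{i=1}^{j+1} e_i − e_{n-j-1} − 2∑_{i=n-j}^{n-1} e_i for 0 ≤ j ≤ (n-3)/2, and T̄ e_{n-1-j} = 2∑_{i=1}^{j} e_i + e_{j+1} − 2∑_{i=n-j}^{n-1} e_i for 0 ≤ j ≤ (n-3)/2. For n ≡ 1 mod 4 let z ∈ ℚ^{n-1} be (2/n)·((n-1)/2, −(n-3)/2, …, 2, −1, 1, −2, …, (n-3)/2, −(n-1)/2)ᵀ. Then T̄ z = z. -/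
open Finset

private def Wf (m k : ℕ) : ℚ :=
  if k ≤ m - 1 then (-1 : ℚ) ^ k * ((m - k : ℕ) : ℚ)
  else (-1 : ℚ) ^ (k - m) * ((k - m + 1 : ℕ) : ℚ)

private def Af (m r k : ℕ) : ℚ :=
  if k ≤ m - 1 then
    (if r ≤ k then 2 else if r = 2*m - 1 - k then -1 else if 2*m - k ≤ r then -2 else 0)
  else
    (if r < 2*m - 1 - k then 2 else if r = 2*m - 1 - k then 1
     else if 2*m - (2*m - 1 - k) ≤ r then -2 else 0)

private lemma Wf_reflect (m : ℕ) (hm2 : 2 ≤ m) (hme : m % 2 = 0) (c : ℕ) (hc : c < m) :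
    Wf m (2*m - 1 - c) = - Wf m c := by
  unfold Wf
  rw [if_neg (by omega), if_pos (by omega)]
  rw [show 2*m - 1 - c - m = m - 1 - c from by omega,
      show m - 1 - c + 1 = m - c from by omega]
  rcases Nat.even_or_odd c with hc' | hc'
  · have ho : Odd (m - 1 - c) := by
      rcases hc' with ⟨t, ht⟩; exact Nat.odd_iff.mpr (by omega)
    rw [ho.neg_one_pow, hc'.neg_one_pow]; ring
  · have he : Even (m - 1 - c) := by
      rcases hc' with ⟨t, ht⟩; exact Nat.even_iff.mpr (by omega)
    rw [he.neg_one_pow, hc'.neg_one_pow]; ring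

private lemma Af_pair (m r c : ℕ) (hm2 : 2 ≤ m) (hc : c < m) (hr : r < 2*m) :
    Af m r c - Af m r (2*m - 1 - c) =
      (if r = c then 1 else 0) - (if r = 2*m - 1 - c then 1 else 0) := by
  unfold Af
  rw [if_pos (by omega : c ≤ m - 1), if_neg (by omega : ¬ 2*m - 1 - c ≤ m - 1)]
  rw [show 2*m - 1 - (2*m - 1 - c) = c from by omega]
  split_ifs <;> first | (exfalso; omega) | norm_num

private lemma key_sum (m r : ℕ) (hm2 : 2 ≤ m) (hme : m % 2 = 0) (hr : r < 2*m) :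
    ∑ c ∈ range (2*m), Af m r c * Wf m c = Wf m r := by
  have hsplit : ∑ c ∈ range (2*m), Af m r c * Wf m c
      = ∑ c ∈ range m, Af m r c * Wf m c + ∑ c ∈ Ico m (2*m), Af m r c * Wf m c := by
    rw [range_eq_Ico, ← sum_Ico_consecutive _ (by omega : 0 ≤ m) (by omega : m ≤ 2*m),
        ← range_eq_Ico]
  have h2 : ∑ c ∈ Ico m (2*m), Af m r c * Wf m c
      = ∑ c ∈ range m, Af m r (2*m - 1 - c) * Wf m (2*m - 1 - c) := by
    rw [sum_Ico_eq_sum_range, show 2*m - m = m from by omega,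
        ← Finset.sum_range_reflect]
    refine sum_congr rfl fun c hc => ?_
    rw [mem_range] at hc
    rw [show m + (m - 1 - c) = 2*m - 1 - c from by omega]
  rw [hsplit, h2, ← Finset.sum_add_distrib]
  have hterm : ∀ c ∈ range m,
      Af m r c * Wf m c + Af m r (2*m-1-c) * Wf m (2*m-1-c)
        = ((if r = c then 1 else 0) - (if r = 2*m-1-c then 1 else 0)) * Wf m c := by
    intro c hc
    rw [mem_range] at hc
    rw [Wf_reflect m hm2 hme c hc]
    have h := Af_pair m r c hm2 hc hr
    linear_combination Wf m c * h
  rw [sum_congr rfl hterm]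
  by_cases hrm : r < m
  · have hstep : ∀ c ∈ range m,
        ((if r = c then 1 else 0) - (if r = 2*m-1-c then 1 else 0)) * Wf m c
          = if r = c then Wf m c else 0 := by
      intro c hc
      rw [mem_range] at hc
      rw [if_neg (by omega : ¬ r = 2*m-1-c)]
      split_ifs <;> ring
    rw [sum_congr rfl hstep, Finset.sum_ite_eq, if_pos (mem_range.mpr hrm)]
  · have hstep : ∀ c ∈ range m,
        ((if r = c then 1 else 0) - (if r = 2*m-1-c then 1 else 0)) * Wf m c
          = if 2*m-1-r = c then -Wf m c else 0 := by
      intro c hc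
      rw [mem_range] at hc
      rw [if_neg (by omega : ¬ r = c)]
      by_cases h : 2*m-1-r = c
      · rw [if_pos h, if_pos (by omega)]; ring
      · rw [if_neg h, if_neg (by omega)]; ring
    rw [sum_congr rfl hstep, Finset.sum_ite_eq,
        if_pos (mem_range.mpr (by omega : 2*m-1-r < m))]
    have hw := Wf_reflect m hm2 hme (2*m-1-r) (by omega)
    rw [show 2*m-1-(2*m-1-r) = r from by omega] at hw
    linarith [hw]

theorem stmt_13 (n : ℕ) (hn : 5 ≤ n) (hodd : Odd n) (hn4 : n % 4 = 1)
    (M : Matrix (Fin (n-1)) (Fin (n-1)) ℚ)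
    (hM : ∀ r c : Fin (n-1), M r c =
      if (c : ℕ) ≤ (n-3)/2 then
        (if (r : ℕ) ≤ (c : ℕ) then 2
         else if (r : ℕ) = n - 2 - (c : ℕ) then -1
         else if n - 1 - (c : ℕ) ≤ (r : ℕ) then -2 else 0)
      else
        (if (r : ℕ) < n - 2 - (c : ℕ) then 2
         else if (r : ℕ) = n - 2 - (c : ℕ) then 1
         else if n - 1 - (n - 2 - (c : ℕ)) ≤ (r : ℕ) then -2 else 0))
    (z : Fin (n-1) → ℚ)
    (hz : z = fun i : Fin (n-1) => (2 / (n : ℚ)) *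
      (if (i : ℕ) ≤ (n-3)/2 then
        (-1 : ℚ) ^ (i : ℕ) * (((n-1)/2 - (i : ℕ) : ℕ) : ℚ)
       else
        (-1 : ℚ) ^ ((i : ℕ) - (n-1)/2) * (((i : ℕ) - (n-1)/2 + 1 : ℕ) : ℚ))) :
    M.mulVec z = z := by
  obtain ⟨m, rfl⟩ := hodd
  have hm2 : 2 ≤ m := by omega
  have hme : m % 2 = 0 := by omega
  funext r
  have hr2 : (r : ℕ) < 2*m := by have := r.isLt; omega
  have hterm : ∀ c : Fin (2*m+1-1),
      M r c * z c = (2 / ((2*m+1 : ℕ) : ℚ)) * (Af m (r:ℕ) (c:ℕ) * Wf m (c:ℕ)) := by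
    intro c
    rw [hM r c]
    simp only [hz]
    simp only [show 2*m+1-3 = 2*m-2 from by omega, show (2*m-2)/2 = m-1 from by omega,
      show 2*m+1-1 = 2*m from by omega, show 2*m/2 = m from by omega,
      show 2*m+1-2 = 2*m-1 from by omega]
    unfold Af Wf
    ring
  have hzr : z r = (2 / ((2*m+1 : ℕ) : ℚ)) * Wf m (r:ℕ) := by
    simp only [hz]
    simp only [show 2*m+1-3 = 2*m-2 from by omega, show (2*m-2)/2 = m-1 from by omega,
      show 2*m+1-1 = 2*m from by omega, show 2*m/2 = m from by omega]
    unfold Wf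
    ring
  show ∑ c, M r c * z c = z r
  calc ∑ c : Fin (2*m+1-1), M r c * z c
      = ∑ c : Fin (2*m+1-1), (2 / ((2*m+1 : ℕ) : ℚ)) * (Af m (r:ℕ) (c:ℕ) * Wf m (c:ℕ)) :=
        sum_congr rfl fun c _ => hterm c
    _ = (2 / ((2*m+1 : ℕ) : ℚ)) * ∑ c : Fin (2*m+1-1), Af m (r:ℕ) (c:ℕ) * Wf m (c:ℕ) :=
        (Finset.mul_sum _ _ _).symm
    _ = (2 / ((2*m+1 : ℕ) : ℚ)) * ∑ c ∈ range (2*m+1-1), Af m (r:ℕ) c * Wf m c := by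
        rw [Fin.sum_univ_eq_sum_range (fun k => Af m (r:ℕ) k * Wf m k)]
    _ = (2 / ((2*m+1 : ℕ) : ℚ)) * Wf m (r:ℕ) :=
        congrArg (fun t => (2 / ((2*m+1 : ℕ) : ℚ)) * t) (key_sum m (r:ℕ) hm2 hme hr2)
    _ = z r := hzr.symm
end

section
/- In the free group F_n with basis x₁, ..., x_n, suppose S = {v_h ĉ_i v_h⁻¹ : h ∈ I, i ∈ J} is a free basis of a subgroup N ≤ F_n, and let φ_{i,h} : N → ℤ be the homomorphism sending the free generator v_h ĉ_i v_h⁻¹ to 1 and all other elements of S to 0. Then for any w ∈ F_n with w ĉ_j^l w⁻¹ ∈ N written in terms of the basis, one has φ_{i,h}(w ĉ_j^l w⁻¹) = l if the conjugate w ĉ_j w⁻¹ is conjugate in N to v_h ĉ_i v_h⁻¹'s underlying generator (i.e. j = i and w, v_h define the same coset data), and 0 otherwise. Consequently, if a subgroup N' ≤ N is generated by elements of the form u ĉ_i^{r} u⁻¹ with prescribed exponents r = r(i, class of u), then w ĉ_i^l w⁻¹ ∈ N' implies r(i, class of w) divides l. -/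
theorem stmt_15 (α J Q : Type*) [Group Q] [DecidableEq J] [DecidableEq Q]
    (m : FreeGroup α →* Q) (v : Q → FreeGroup α) (hv : ∀ q : Q, m (v q) = q)
    (c : J → FreeGroup α) (hc : ∀ j : J, c j ∈ m.ker)
    (ι : FreeGroup (J × Q) →* FreeGroup α)
    (hι : ∀ p : J × Q, ι (FreeGroup.of p) = v p.2 * c p.1 * (v p.2)⁻¹)
    (hinj : Function.Injective ι) (hrange : ι.range = m.ker)
    (φ : J × Q → (FreeGroup (J × Q) →* Multiplicative ℤ))
    (hφ : ∀ p : J × Q, φ p = FreeGroup.lift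
      (fun q => Multiplicative.ofAdd (if q = p then (1 : ℤ) else 0)))
    (r : J → Q → ℕ) :
    (∀ (w : FreeGroup α) (j : J) (l : ℤ) (x : FreeGroup (J × Q)),
      ι x = w * (c j) ^ l * w⁻¹ →
      ∀ p : J × Q, Multiplicative.toAdd ((φ p) x) = if p = (j, m w) then l else 0) ∧
    (∀ (w : FreeGroup α) (j : J) (l : ℤ),
      w * (c j) ^ l * w⁻¹ ∈ Subgroup.closure
        {x : FreeGroup α | ∃ (j' : J) (u : FreeGroup α), x = u * (c j') ^ (r j' (m u)) * u⁻¹} →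
      ((r j (m w) : ℤ)) ∣ l) := by
  -- key construction
  have key : ∀ (w : FreeGroup α) (j : J) (l : ℤ), ∃ y : FreeGroup (J × Q),
      ι (y * (FreeGroup.of (j, m w)) ^ l * y⁻¹) = w * (c j) ^ l * w⁻¹ := by
    intro w j l
    have hker : w * (v (m w))⁻¹ ∈ m.ker := by
      simp [MonoidHom.mem_ker, hv]
    rw [← hrange] at hker
    obtain ⟨y, hy⟩ := hker
    refine ⟨y, ?_⟩
    have h1 : ι (FreeGroup.of (j, m w)) ^ l = v (m w) * (c j) ^ l * (v (m w))⁻¹ := by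
      rw [hι]; exact conj_zpow
    rw [map_mul, map_mul, map_inv, hy, map_zpow, h1]
    group
  have hval : ∀ (w : FreeGroup α) (j : J) (l : ℤ) (x : FreeGroup (J × Q)),
      ι x = w * (c j) ^ l * w⁻¹ →
      ∀ p : J × Q, Multiplicative.toAdd ((φ p) x) = if p = (j, m w) then l else 0 := by
    intro w j l x hx p
    obtain ⟨y, hy⟩ := key w j l
    have hxe : x = y * (FreeGroup.of (j, m w)) ^ l * y⁻¹ := hinj (by rw [hx, hy])
    subst hxe
    rw [hφ]
    simp only [map_mul, map_zpow, map_inv, FreeGroup.lift_apply_of, toAdd_mul, toAdd_inv,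
      toAdd_zpow, toAdd_ofAdd]
    rcases eq_or_ne p (j, m w) with h | h
    · simp [h]
    · have h' : (j, m w) ≠ p := fun e => h e.symm
      simp [h, h']
  refine ⟨hval, ?_⟩
  intro w j l hmem
  -- every generator lies in the range of ι
  set S : Set (FreeGroup α) :=
    {x : FreeGroup α | ∃ (j' : J) (u : FreeGroup α), x = u * (c j') ^ (r j' (m u)) * u⁻¹} with hS
  set p : J × Q := (j, m w) with hp
  -- predicate for induction
  have main : ∀ g ∈ Subgroup.closure S,
      ∃ x : FreeGroup (J × Q), ι x = g ∧ ((r j (m w) : ℤ)) ∣ Multiplicative.toAdd ((φ p) x) := by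
    intro g hg
    induction hg using Subgroup.closure_induction with
    | mem s hs =>
        obtain ⟨j', u, rfl⟩ := hs
        obtain ⟨y, hy⟩ := key u j' (r j' (m u) : ℤ)
        refine ⟨y * (FreeGroup.of (j', m u)) ^ ((r j' (m u) : ℤ)) * y⁻¹, by rw [hy, zpow_natCast], ?_⟩
        rw [hval u j' (r j' (m u) : ℤ) _ hy p]
        split_ifs with h
        · rw [hp] at h
          rw [Prod.mk.injEq] at h
          rw [h.1, h.2]
        · exact dvd_zero _
    | one => exact ⟨1, map_one ι, by simp⟩
    | mul a b ha hb iha ihb =>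
        obtain ⟨x1, hx1, d1⟩ := iha
        obtain ⟨x2, hx2, d2⟩ := ihb
        exact ⟨x1 * x2, by rw [map_mul, hx1, hx2], by
          rw [map_mul, toAdd_mul]; exact dvd_add d1 d2⟩
    | inv a ha iha =>
        obtain ⟨x1, hx1, d1⟩ := iha
        exact ⟨x1⁻¹, by rw [map_inv, hx1], by
          rw [map_inv, toAdd_inv]; exact dvd_neg.mpr d1⟩
  obtain ⟨x, hx, hd⟩ := main _ hmem
  rw [hval w j l x hx p, hp, if_pos rfl] at hd
  exact hd
end

section
/- Let ⟨R, T ∣ R^{2n} = 1, (T⁻¹R)² = Rⁿ, RⁿT = TRⁿ⟩ be the presentation of the Veech group of the double regular n-gon (n ≥ 5 odd). Then in this group, the subgroup generated by T together with all its conjugates is the whole group; equivalently, the group is generated by {T, R⁻¹TR}. -/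
theorem stmt_17 (n : ℕ) (hn : 5 ≤ n) (hodd : Odd n)
    (rels : Set (FreeGroup Bool))
    (hrels : rels = {(FreeGroup.of true) ^ (2 * n),
      ((FreeGroup.of false)⁻¹ * FreeGroup.of true) ^ 2 * ((FreeGroup.of true) ^ n)⁻¹,
      (FreeGroup.of true) ^ n * FreeGroup.of false *
        ((FreeGroup.of true) ^ n)⁻¹ * (FreeGroup.of false)⁻¹}) :
    Subgroup.normalClosure {(PresentedGroup.of false : PresentedGroup rels)} = ⊤ ∧
    Subgroup.closure {(PresentedGroup.of false : PresentedGroup rels),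
        (PresentedGroup.of true : PresentedGroup rels)⁻¹ *
          PresentedGroup.of false * PresentedGroup.of true} = ⊤ := by
  set R : PresentedGroup rels := PresentedGroup.of true with hR
  set T : PresentedGroup rels := PresentedGroup.of false with hT
  have hone : ∀ r ∈ rels, PresentedGroup.mk rels r = 1 := fun r hr =>
    (QuotientGroup.eq_one_iff r).2 (Subgroup.subset_normalClosure hr)
  have h1 : R ^ (2 * n) = 1 := by
    have := hone _ (by rw [hrels]; left; rfl)
    rwa [map_pow] at this
  have h2 : (T⁻¹ * R) ^ 2 * (R ^ n)⁻¹ = 1 := by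
    have := hone _ (by rw [hrels]; right; left; rfl)
    simp only [map_pow, map_mul, map_inv] at this; exact this
  -- key identity: T * R⁻¹ * T = R^(n+1)
  have hRn : (R ^ n)⁻¹ = R ^ n := by
    rw [inv_eq_iff_mul_eq_one, ← pow_add]
    rwa [two_mul] at h1
  have hsq : T⁻¹ * R * T⁻¹ * R = R ^ n := by
    rw [mul_inv_eq_one] at h2
    rw [← h2, sq]; group
  have hkey : T * R⁻¹ * T = R ^ (n + 1) := by
    have : T⁻¹ * R * T⁻¹ = R ^ n * R⁻¹ := by
      rw [← hsq]; group
    have h' : T * R⁻¹ * T = (T⁻¹ * R * T⁻¹)⁻¹ := by group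
    rw [h', this, mul_inv_rev, inv_inv, hRn, pow_succ']
  have hTS : T * (R⁻¹ * T * R) = R ^ (n + 2) := by
    calc T * (R⁻¹ * T * R) = (T * R⁻¹ * T) * R := by group
    _ = R ^ (n + 1) * R := by rw [hkey]
    _ = R ^ (n + 2) := by rw [← pow_succ]
  -- coprimality and Bezout
  have hcop : Nat.Coprime (n + 2) (2 * n) := by
    have h2' : Nat.Coprime (n + 2) 2 := by
      rw [Nat.coprime_two_right]
      rcases hodd with ⟨k, hk⟩; exact ⟨k + 1, by omega⟩
    have hn' : Nat.Coprime (n + 2) n := by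
      have : Nat.Coprime (2 + n) n := by
        rw [Nat.coprime_add_self_left, Nat.coprime_two_left]; exact hodd
      rwa [Nat.add_comm] at this
    exact Nat.Coprime.mul_right h2' hn'
  have hbez : ∃ a b : ℤ, a * (n + 2) + b * (2 * n) = 1 := by
    have : IsCoprime ((n : ℤ) + 2) (2 * n) := by
      rw [Int.isCoprime_iff_gcd_eq_one]
      have := hcop
      unfold Nat.Coprime at this
      rw [Int.gcd]
      rw [show ((n:ℤ)+2).natAbs = n+2 by omega, show (2*(n:ℤ)).natAbs = 2*n by omega]; exact this
    obtain ⟨a, b, hab⟩ := this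
    exact ⟨a, b, by push_cast; linarith⟩
  obtain ⟨a, b, hab⟩ := hbez
  set S : PresentedGroup rels := R⁻¹ * T * R with hS
  have hRmem : ∀ (H : Subgroup (PresentedGroup rels)), T ∈ H → S ∈ H → R ∈ H := by
    intro H hTm hSm
    have hTSH : T * S ∈ H := mul_mem hTm hSm
    have h1' : R ^ ((2 * n : ℕ) : ℤ) = 1 := by rw [zpow_natCast, h1]
    have hRz : (T * S) ^ a = R := by
      rw [hTS, ← zpow_natCast R (n + 2), ← zpow_mul]
      have he : ((n + 2 : ℕ) : ℤ) * a = 1 + (-b) * ((2 * n : ℕ) : ℤ) := by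
        push_cast; linarith
      rw [he, zpow_add, zpow_one, mul_comm (-b), zpow_mul, h1', one_zpow, mul_one]
    rw [← hRz]
    exact zpow_mem hTSH a
  have hclosure : Subgroup.closure {T, S} = ⊤ := by
    rw [eq_top_iff, ← PresentedGroup.closure_range_of rels, Subgroup.closure_le]
    rintro x ⟨c, rfl⟩
    cases c
    · exact Subgroup.subset_closure (Or.inl rfl)
    · exact hRmem _ (Subgroup.subset_closure (Or.inl rfl))
        (Subgroup.subset_closure (Or.inr rfl))
  constructor
  · rw [eq_top_iff, ← hclosure, Subgroup.closure_le]
    rintro x (rfl | rfl)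
    · exact Subgroup.subset_normalClosure rfl
    · have hTn : T ∈ Subgroup.normalClosure {T} := Subgroup.subset_normalClosure rfl
      have : R⁻¹ * T * R ∈ Subgroup.normalClosure ({T} : Set (PresentedGroup rels)) := by
        have := (Subgroup.normalClosure_normal (s := ({T} : Set (PresentedGroup rels)))).conj_mem T hTn R⁻¹
        simpa [mul_assoc] using this
      exact this
  · exact hclosure
end
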